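/- Let m ≥ 4 and q = 2^m. For any r ∈ F_q with r ∉ F₂, setting d = (r+1)²/r ∈ F_q, the function F₁ : F_{q²} → F_{q²} given by F₁(x) = x^{3q} + dx^{2q+1} + x^{q+2} is affine equivalent to G₂(x) = x^{2^{m-1}+1}. In fact, with L(x) = x^q + rx, one has L(G₂(L(x)^{2q})) = (r³ + r)·F₁(x) for all x ∈ F_{q²}, and L is a bijection of F_{q²}. -/

import Mathlib

/-- `f` is almost perfect nonlinear (APN): for every `a ≠ 0` and every `b`, the equation
`f (x + a) + f x = b` has at most two solutions `x`. -/
def IsAPN {F : Type*} [Field F] (f : F → F) : Prop :=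
  ∀ a : F, a ≠ 0 → ∀ b : F, {x : F | f (x + a) + f x = b}.ncard ≤ 2

/-- `L` is an affine permutation: it is bijective and `x ↦ L x - L 0` is additive
(over a field of characteristic 2, additive maps are exactly the `𝔽₂`-linear ones). -/
def IsAffinePerm {F : Type*} [Field F] (L : F → F) : Prop :=
  Function.Bijective L ∧ ∀ x y : F, L (x + y) + L 0 = L x + L y

/-- `f` and `g` are affine equivalent: `g = L₁ ∘ f ∘ L₂` for affine permutations `L₁, L₂`. -/
def AffEquiv {F : Type*} [Field F] (f g : F → F) : Prop :=
  ∃ L₁ L₂ : F → F, IsAffinePerm L₁ ∧ IsAffinePerm L₂ ∧ ∀ x : F, g x = L₁ (f (L₂ x))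

/-!
With `q = 2^m` and `y = x^q`, the map `L x = y + r x` satisfies `(L x)^q = x + r y`, since
`r^q = r` and `x^(q²) = x`. As `2q (2^(m-1) + 1) = q² + 2q`, this gives
`G₂((L x)^(2q)) = (y + r x)(x + r y)²`, and applying `L` once more gives a cubic form
in `x, y` which in characteristic 2 is `(r³ + r) F₁(x)`. Both `L` and `x ↦ (L x)^(2q)` are
additive, and `L` has trivial kernel because `L c = 0` forces `c = c^(q²) = r² c`, while
`r² ≠ 1`. So `G₂` is obtained from `F₁` by composing with additive bijections and a scaling.
-/

open Function

section

variable {F : Type*} [Field F]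

theorem charP_two_of_card_eq_two_pow [Fintype F] {n : ℕ} (hn : n ≠ 0)
    (hcard : Fintype.card F = 2 ^ n) : CharP F 2 :=
  ringChar.of_eq (FiniteField.even_card_iff_char_two.mpr (by simp [hcard, Nat.pos_of_ne_zero hn]))

theorem pow_two_pow_pow_two_pow_of_card [Fintype F] {m : ℕ} (hcard : Fintype.card F = 2 ^ (2 * m))
    (x : F) : (x ^ 2 ^ m) ^ 2 ^ m = x := by
  rw [← pow_mul, ← pow_add, ← two_mul, ← hcard, FiniteField.pow_card]

theorem AddEquiv.isAffinePerm (e : F ≃+ F) : IsAffinePerm e :=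
  ⟨e.bijective, fun x y => by rw [map_add, map_zero, add_zero]⟩

theorem affEquiv_of_addEquiv {f g : F → F} (e₁ e₂ : F ≃+ F) {c : F} (hc : c ≠ 0)
    (h : ∀ x, e₁ (g (e₂ x)) = c * f x) : AffEquiv f g := by
  let scale : F ≃+ F := (LinearEquiv.smulOfNeZero F F c hc).toAddEquiv
  refine ⟨scale.trans e₁.symm, e₂.symm, (scale.trans e₁.symm).isAffinePerm,
    e₂.symm.isAffinePerm, fun x => ?_⟩
  have hx := h (e₂.symm x)
  rw [e₂.apply_symm_apply] at hx
  simp [scale, ← hx]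

section CharTwo

variable [CharP F 2] (m : ℕ) (r : F)

def frobeniusAddMul : F →+ F :=
  (iterateFrobenius F 2 m).toAddMonoidHom + AddMonoidHom.mulLeft r

@[simp]
theorem frobeniusAddMul_apply (x : F) : frobeniusAddMul m r x = x ^ 2 ^ m + r * x := rfl

variable {m r}

theorem frobeniusAddMul_injective (hF : ∀ x : F, (x ^ 2 ^ m) ^ 2 ^ m = x) (hr : r ^ 2 ^ m = r)
    (hr1 : r ≠ 1) : Injective (frobeniusAddMul m r) := by
  refine (injective_iff_map_eq_zero _).mpr fun c hc => ?_
  have hcq : c ^ 2 ^ m = r * c := CharTwo.add_eq_zero.mp (by simpa using hc)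
  have hc_eq : c = r ^ 2 * c := by
    calc c = (c ^ 2 ^ m) ^ 2 ^ m := (hF c).symm
      _ = r ^ 2 * c := by rw [hcq, mul_pow, hr, hcq]; ring
  have hr2 : r ^ 2 ≠ 1 := by rwa [← one_pow 2, Ne, CharTwo.sq_inj]
  by_contra hc0
  exact hr2 (mul_right_cancel₀ hc0 (by rw [one_mul, ← hc_eq]))

theorem frobeniusAddMul_pow_frobeniusAddMul (hm : m ≠ 0) (hF : ∀ x : F, (x ^ 2 ^ m) ^ 2 ^ m = x)
    (hr : r ^ 2 ^ m = r) {d : F} (hd : r * d = (r + 1) ^ 2) (x : F) :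
    frobeniusAddMul m r ((frobeniusAddMul m r x ^ (2 * 2 ^ m)) ^ (2 ^ (m - 1) + 1)) =
      (r ^ 3 + r) * (x ^ (3 * 2 ^ m) + d * x ^ (2 * 2 ^ m + 1) + x ^ (2 ^ m + 2)) := by
  set q := 2 ^ m
  set y := x ^ q
  have hfrob (a b : F) : (a + r * b) ^ q = a ^ q + r * b ^ q := by
    rw [add_pow_char_pow, mul_pow, hr]
  have hA : (x + r * y) ^ q = y + r * x := by rw [hfrob, hF x]
  have hB : (y + r * x) ^ q = x + r * y := by rw [hfrob, hF x]
  have hexp : 2 * q * (2 ^ (m - 1) + 1) = q * q + q * 2 := by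
    have : 2 * 2 ^ (m - 1) = q := by rw [← pow_succ', Nat.sub_add_cancel (by omega)]
    rw [← this]; ring
  have hG₂ : (frobeniusAddMul m r x ^ (2 * q)) ^ (2 ^ (m - 1) + 1) =
      (y + r * x) * (x + r * y) ^ 2 := by
    rw [frobeniusAddMul_apply, ← pow_mul, hexp, pow_add, pow_mul, pow_mul, hB, hA]
  have hx3 : x ^ (3 * q) = y ^ 3 := by rw [mul_comm, pow_mul]
  have hx2 : x ^ (2 * q + 1) = y ^ 2 * x := by rw [pow_succ, mul_comm 2, pow_mul]
  rw [hG₂, frobeniusAddMul_apply, mul_pow, pow_right_comm _ 2, hA, hB, hx3, hx2, pow_add]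
  linear_combination -(r ^ 2 + 1) * y ^ 2 * x * hd +
    (r ^ 2 * x ^ 3 + (r ^ 2 - r ^ 3 - r) * x * y ^ 2 + (r + r ^ 3) * x ^ 2 * y) *
      CharTwo.two_eq_zero (R := F)

theorem pow_three_add_self_ne_zero (hr0 : r ≠ 0) (hr1 : r ≠ 1) : r ^ 3 + r ≠ 0 := by
  have hr1' : r + 1 ≠ 0 := fun h => hr1 (CharTwo.add_eq_zero.mp h)
  have hfactor : r ^ 3 + r = r * (r + 1) ^ 2 := by
    linear_combination -r ^ 2 * CharTwo.two_eq_zero (R := F)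
  rw [hfactor]
  exact mul_ne_zero hr0 (pow_ne_zero 2 hr1')

end CharTwo

end

/-- For `r ∈ 𝔽_q \ 𝔽₂` (expressed as `r^(2^m) = r`, `r ≠ 0`, `r ≠ 1`), with
`d = (r+1)²/r`, the function `F₁(x) = x^{3q} + dx^{2q+1} + x^{q+2}` is affine equivalent to
`G₂(x) = x^{2^{m-1}+1}`; moreover with `L(x) = x^q + rx` one has
`L(G₂(L(x)^{2q})) = (r³+r)·F₁(x)` and `L` is a bijection. Here `q = 2^m`, `m ≥ 4`. -/
theorem F1_equiv_G2
    (m : ℕ) (hm : 4 ≤ m) (F : Type*) [Field F] [Fintype F]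
    (hcard : Fintype.card F = 2 ^ (2 * m))
    (r : F) (hr : r ^ (2 ^ m) = r) (hr0 : r ≠ 0) (hr1 : r ≠ 1)
    (d : F) (hd : d = (r + 1) ^ 2 / r)
    (F₁ L : F → F)
    (hF₁ : ∀ x : F, F₁ x = x ^ (3 * 2 ^ m) + d * x ^ (2 * 2 ^ m + 1) + x ^ (2 ^ m + 2))
    (hL : ∀ x : F, L x = x ^ (2 ^ m) + r * x) :
    AffEquiv F₁ (fun x : F => x ^ (2 ^ (m - 1) + 1)) ∧
    (∀ x : F, L (((L x) ^ (2 * 2 ^ m)) ^ (2 ^ (m - 1) + 1)) = (r ^ 3 + r) * F₁ x) ∧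
    Function.Bijective L := by
  have : CharP F 2 := charP_two_of_card_eq_two_pow (by omega) hcard
  have hF := pow_two_pow_pow_two_pow_of_card hcard
  obtain rfl : L = frobeniusAddMul m r := funext hL
  have hLbij : Bijective (frobeniusAddMul m r) :=
    Finite.injective_iff_bijective.mp (frobeniusAddMul_injective hF hr hr1)
  have hId (x : F) : frobeniusAddMul m r ((frobeniusAddMul m r x ^ (2 * 2 ^ m)) ^ (2 ^ (m - 1) + 1))
      = (r ^ 3 + r) * F₁ x := by
    rw [hF₁]
    exact frobeniusAddMul_pow_frobeniusAddMul (by omega) hF hr (by rw [hd, mul_div_cancel₀ _ hr0]) x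
  refine ⟨?_, hId, hLbij⟩
  let e := AddEquiv.ofBijective _ hLbij
  refine affEquiv_of_addEquiv e (e.trans (iterateFrobeniusEquiv F 2 (m + 1)).toAddEquiv)
    (pow_three_add_self_ne_zero hr0 hr1) fun x => ?_
  show frobeniusAddMul m r ((frobeniusAddMul m r x ^ 2 ^ (m + 1)) ^ (2 ^ (m - 1) + 1)) = _
  rw [pow_succ' 2 m]
  exact hId x
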